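/- arXiv:1905.08935 — 8 statements merged into one kernel-verified Lean document; each statement's English description precedes it below -/
import Mathlib

section
/- For every continuous map f : X → Y of compact Hausdorff spaces and every idempotent probability measure μ on X, the support of the pushforward equals the image of the support: supp(I(f)(μ)) = f(supp μ). -/
/-- `μ : C(X, ℝ) → ℝ` is an idempotent probability measure. -/
def IsIPM {X : Type*} [TopologicalSpace X] (μ : C(X, ℝ) → ℝ) : Prop :=
  (∀ c : ℝ, μ (ContinuousMap.const X c) = c) ∧
  (∀ (φ : C(X, ℝ)) (c : ℝ), μ (φ + ContinuousMap.const X c) = μ φ + c) ∧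
  (∀ φ ψ : C(X, ℝ), μ (φ ⊔ ψ) = max (μ φ) (μ ψ))

/-- `μ` is supported on the set `F`. -/
def IPMSupportedOn {X : Type*} [TopologicalSpace X] (μ : C(X, ℝ) → ℝ) (F : Set X) : Prop :=
  ∀ φ ψ : C(X, ℝ), (∀ x ∈ F, φ x = ψ x) → μ φ = μ ψ

/-- The support of `μ`. -/
def IPMsupport {X : Type*} [TopologicalSpace X] (μ : C(X, ℝ) → ℝ) : Set X :=
  ⋂₀ {F : Set X | IsClosed F ∧ IPMSupportedOn μ F}

/-- The pushforward `I(f)`. -/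
def IPMmap {X Y : Type*} [TopologicalSpace X] [TopologicalSpace Y]
    (f : C(X, Y)) (μ : C(X, ℝ) → ℝ) : C(Y, ℝ) → ℝ :=
  fun ψ => μ (ψ.comp f)

/-- The max-plus combination `α⊙μ₁ ⊕ β⊙μ₂`. -/
def mpComb {X : Type*} [TopologicalSpace X] (α β : ℝ) (μ₁ μ₂ : C(X, ℝ) → ℝ) :
    C(X, ℝ) → ℝ :=
  fun φ => max (α + μ₁ φ) (β + μ₂ φ)

/-- The Dirac measure `δ_x`. -/
def IPMdirac {X : Type*} [TopologicalSpace X] (x : X) : C(X, ℝ) → ℝ := fun φ => φ x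

/-- `μ` is a finitely supported idempotent probability measure of the form
`λ₁⊙δ_{x₁} ⊕ … ⊕ λ_s⊙δ_{x_s}` with all the points `xᵢ` in `Y`. -/
def IsFinSuppIPM {X : Type*} [TopologicalSpace X] (Y : Set X) (μ : C(X, ℝ) → ℝ) : Prop :=
  ∃ (n : ℕ) (x : Fin (n + 1) → X) (lam : Fin (n + 1) → ℝ),
    (∀ i, x i ∈ Y) ∧
    Finset.univ.sup' Finset.univ_nonempty lam = 0 ∧
    μ = fun φ => Finset.univ.sup' Finset.univ_nonempty fun i => lam i + φ (x i)

/-- `I_β(X)`: idempotent probability measures on `βX` with support in (the image of) `X`. -/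
def IBeta (X : Type*) [TopologicalSpace X] : Set (C(StoneCech X, ℝ) → ℝ) :=
  {μ | IsIPM μ ∧ IPMsupport μ ⊆ Set.range (stoneCechUnit : X → StoneCech X)}


/-!
If `I(f)μ` is supported on a closed `G ⊆ Y` and `φ = ψ` on `f⁻¹ G`, then `φ < ψ + ε` off a
compact `D` whose image misses `G`. Urysohn gives `κ` on `Y` equal to `‖φ‖` on `f D` and to the
constant `μ ψ + ε` on `G`, so `I(f)μ κ = μ ψ + ε`; since `φ ≤ κ ∘ f ⊔ (ψ + ε)`, idempotency gives
`μ φ ≤ μ ψ + ε`. For `f = id` this shows that closed supporting sets are closed under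
intersection, and then compactness shows that `μ` is supported on `supp μ`. Both inclusions of
the theorem follow: `f (supp μ)` supports `I(f)μ`, and `f⁻¹ (supp I(f)μ)` supports `μ`.
-/

open Set ContinuousMap

section

variable {X Y : Type*} [TopologicalSpace X] [TopologicalSpace Y] {μ : C(X, ℝ) → ℝ}

theorem isClosed_IPMsupport : IsClosed (IPMsupport μ) :=
  isClosed_sInter fun _ hF => hF.1

theorem IPMSupportedOn.univ : IPMSupportedOn μ univ :=
  fun _ _ h => congrArg μ (ContinuousMap.ext fun x => h x (mem_univ x))

theorem IPMSupportedOn.map {S : Set X} (hS : IPMSupportedOn μ S) (f : C(X, Y)) :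
    IPMSupportedOn (IPMmap f μ) (f '' S) :=
  fun _ _ h => hS _ _ fun x hx => h (f x) (mem_image_of_mem f hx)

theorem IPMSupportedOn.of_forall_le_add {S : Set X}
    (h : ∀ φ ψ : C(X, ℝ), (∀ x ∈ S, φ x = ψ x) → ∀ ε > 0, μ φ ≤ μ ψ + ε) :
    IPMSupportedOn μ S := fun φ ψ hS =>
  le_antisymm (le_of_forall_pos_le_add (h φ ψ hS))
    (le_of_forall_pos_le_add (h ψ φ fun x hx => (hS x hx).symm))

namespace IsIPM

theorem monotone (hμ : IsIPM μ) : Monotone μ := fun φ ψ h =>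
  (le_max_left _ _).trans_eq (by rw [← hμ.2.2, sup_of_le_right h])

theorem le_of_supportedOn (hμ : IsIPM μ) {F : Set X} (hF : IPMSupportedOn μ F)
    {φ ψ : C(X, ℝ)} (h : ∀ x ∈ F, φ x ≤ ψ x) : μ φ ≤ μ ψ :=
  calc μ φ = μ (φ ⊓ ψ) := hF _ _ fun x hx => (min_eq_left (h x hx)).symm
    _ ≤ μ ψ := hμ.monotone inf_le_right

theorem map (hμ : IsIPM μ) (f : C(X, Y)) : IsIPM (IPMmap f μ) :=
  ⟨fun c => hμ.1 c, fun ψ c => hμ.2.1 (ψ.comp f) c,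
    fun ψ₁ ψ₂ => hμ.2.2 (ψ₁.comp f) (ψ₂.comp f)⟩

theorem exists_eqOn_const_and_apply_eq [NormalSpace X] (hμ : IsIPM μ) {G D : Set X}
    (hG : IsClosed G) (hGμ : IPMSupportedOn μ G) (hD : IsClosed D) (hDG : Disjoint D G)
    (b a : ℝ) : ∃ κ : C(X, ℝ), (∀ x ∈ D, κ x = b) ∧ μ κ = a := by
  obtain ⟨g, hg0, hg1, -⟩ := exists_continuous_zero_one_of_isClosed hD hG hDG
  refine ⟨const X b + (a - b) • g, fun x hx => by simp [hg0 hx], ?_⟩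
  rw [hGμ _ (const X a) fun x hx => by simp [hg1 hx], hμ.1]

theorem supportedOn_inter_preimage [CompactSpace X] [T2Space Y] [NormalSpace Y]
    (hμ : IsIPM μ) (f : C(X, Y)) {F : Set X} {G : Set Y} (hF : IsClosed F)
    (hFμ : IPMSupportedOn μ F) (hG : IsClosed G) (hGμ : IPMSupportedOn (IPMmap f μ) G) :
    IPMSupportedOn μ (F ∩ f ⁻¹' G) := by
  refine IPMSupportedOn.of_forall_le_add fun φ ψ hφψ ε hε => ?_
  set D := F ∩ {x | ψ x + ε ≤ φ x}
  have hD : IsClosed D := hF.inter (isClosed_le (by fun_prop) (by fun_prop))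
  have hfD : IsClosed (f '' D) := (hD.isCompact.image f.continuous).isClosed
  have hfDG : Disjoint (f '' D) G := by
    refine disjoint_left.mpr ?_
    rintro _ ⟨x, ⟨hxF, hxD⟩, rfl⟩ hxG
    have hxD : ψ x + ε ≤ φ x := hxD
    linarith [hφψ x ⟨hxF, hxG⟩]
  obtain ⟨κ, hκD, hκ⟩ :=
    (hμ.map f).exists_eqOn_const_and_apply_eq hG hGμ hfD hfDG ‖φ‖ (μ ψ + ε)
  have hφ : ∀ x ∈ F, φ x ≤ (κ.comp f ⊔ (ψ + const X ε)) x := by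
    intro x hx
    by_cases hxD : ψ x + ε ≤ φ x
    · calc φ x ≤ ‖φ‖ := (le_abs_self _).trans (φ.norm_coe_le_norm x)
        _ = κ (f x) := (hκD (f x) ⟨x, ⟨hx, hxD⟩, rfl⟩).symm
        _ ≤ _ := le_max_left _ _
    · exact le_max_of_le_right (not_le.mp hxD).le
  calc μ φ ≤ μ (κ.comp f ⊔ (ψ + const X ε)) := hμ.le_of_supportedOn hFμ hφ
    _ = μ ψ + ε := by rw [hμ.2.2, hμ.2.1, show μ (κ.comp f) = μ ψ + ε from hκ, max_self]

theorem supportedOn_inter [CompactSpace X] [T2Space X] (hμ : IsIPM μ) {F G : Set X}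
    (hF : IsClosed F) (hFμ : IPMSupportedOn μ F) (hG : IsClosed G)
    (hGμ : IPMSupportedOn μ G) : IPMSupportedOn μ (F ∩ G) :=
  hμ.supportedOn_inter_preimage (ContinuousMap.id X) hF hFμ hG hGμ

theorem exists_isClosed_supportedOn_subset [CompactSpace X] [T2Space X] (hμ : IsIPM μ)
    {U : Set X} (hU : IsOpen U) (hsupp : IPMsupport μ ⊆ U) :
    ∃ F, IsClosed F ∧ IPMSupportedOn μ F ∧ F ⊆ U := by
  let ι := {F : Set X // IsClosed F ∧ IPMSupportedOn μ F}
  have : Nonempty ι := ⟨⟨univ, isClosed_univ, IPMSupportedOn.univ⟩⟩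
  have hdir : Directed (· ⊇ ·) fun F : ι => F.1 \ U := fun F₁ F₂ =>
    ⟨⟨F₁.1 ∩ F₂.1, F₁.2.1.inter F₂.2.1, hμ.supportedOn_inter F₁.2.1 F₁.2.2 F₂.2.1 F₂.2.2⟩,
      sdiff_subset_sdiff_left inter_subset_left, sdiff_subset_sdiff_left inter_subset_right⟩
  have hempty : univ ∩ ⋂ F : ι, F.1 \ U = ∅ := by
    refine eq_empty_of_forall_notMem fun x hx => ?_
    rw [univ_inter, mem_iInter] at hx
    exact (hx ⟨univ, isClosed_univ, IPMSupportedOn.univ⟩).2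
      (hsupp fun F hF => (hx ⟨F, hF⟩).1)
  obtain ⟨F, hF⟩ := isCompact_univ.elim_directed_family_closed _
    (fun F : ι => F.2.1.sdiff hU) hempty hdir
  rw [univ_inter, sdiff_eq_empty] at hF
  exact ⟨F.1, F.2.1, F.2.2, hF⟩

theorem supportedOn_IPMsupport [CompactSpace X] [T2Space X] (hμ : IsIPM μ) :
    IPMSupportedOn μ (IPMsupport μ) :=
  IPMSupportedOn.of_forall_le_add fun φ ψ h ε hε => by
    obtain ⟨F, -, hFμ, hFU⟩ := hμ.exists_isClosed_supportedOn_subset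
      (isOpen_lt (by fun_prop) (by fun_prop) : IsOpen {x | φ x < ψ x + ε})
      fun x hx => show φ x < ψ x + ε by linarith [h x hx]
    calc μ φ ≤ μ (ψ + const X ε) := hμ.le_of_supportedOn hFμ fun x hx => (hFU hx).le
      _ = μ ψ + ε := hμ.2.1 ψ ε

end IsIPM

end

/-- `supp (I(f)(μ)) = f (supp μ)`. -/
theorem ipm_support_map {X Y : Type*} [TopologicalSpace X] [CompactSpace X]
    [T2Space X] [TopologicalSpace Y] [CompactSpace Y] [T2Space Y]
    (f : C(X, Y)) (μ : C(X, ℝ) → ℝ) (hμ : IsIPM μ) :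
    IPMsupport (IPMmap f μ) = f '' IPMsupport μ := by
  apply Subset.antisymm
  · exact sInter_subset_of_mem
      ⟨(isClosed_IPMsupport.isCompact.image f.continuous).isClosed, hμ.supportedOn_IPMsupport.map f⟩
  · rw [image_subset_iff]
    refine sInter_subset_of_mem ⟨isClosed_IPMsupport.preimage f.continuous, ?_⟩
    simpa only [univ_inter] using hμ.supportedOn_inter_preimage f isClosed_univ
      IPMSupportedOn.univ isClosed_IPMsupport (hμ.map f).supportedOn_IPMsupport
end

section
/- (Core of Theorem 4) Let τ be an infinite cardinal number, X a compact Hausdorff space, and μ₁, μ₂ idempotent probability measures on X whose supports have cardinality strictly less than τ. Then for all α, β ∈ ℝ with max(α, β) = 0, the support of α⊙μ₁ ⊕ β⊙μ₂ also has cardinality strictly less than τ; thus the set I_τ(X) of idempotent probability measures with support of cardinality < τ is max-plus-convex. -/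
universe u

/-- core of Theorem 4: for an infinite cardinal `τ`, the set of idempotent
probability measures with support of cardinality `< τ` is max-plus-convex. -/
theorem ipm_support_card_lt_mpComb {X : Type u} [TopologicalSpace X] [CompactSpace X]
    [T2Space X] (τ : Cardinal.{u}) (hτ : Cardinal.aleph0 ≤ τ)
    (μ₁ μ₂ : C(X, ℝ) → ℝ) (hμ₁ : IsIPM μ₁) (hμ₂ : IsIPM μ₂)
    (h₁ : Cardinal.mk (IPMsupport μ₁) < τ) (h₂ : Cardinal.mk (IPMsupport μ₂) < τ)
    (α β : ℝ) (hαβ : max α β = 0) :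
    Cardinal.mk (IPMsupport (mpComb α β μ₁ μ₂)) < τ := by
  have hsub : IPMsupport (mpComb α β μ₁ μ₂) ⊆ IPMsupport μ₁ ∪ IPMsupport μ₂ := by
    intro x hx
    by_contra hxor
    simp only [Set.mem_union, not_or] at hxor
    obtain ⟨hx1, hx2⟩ := hxor
    simp only [IPMsupport, Set.mem_sInter, Set.mem_setOf_eq, not_forall] at hx1 hx2
    obtain ⟨F₁, ⟨hF₁c, hF₁s⟩, hxF₁⟩ := hx1
    obtain ⟨F₂, ⟨hF₂c, hF₂s⟩, hxF₂⟩ := hx2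
    have hmem : x ∈ F₁ ∪ F₂ := by
      apply hx (F₁ ∪ F₂)
      refine ⟨hF₁c.union hF₂c, ?_⟩
      intro φ ψ hφψ
      have e1 : μ₁ φ = μ₁ ψ := hF₁s φ ψ fun y hy => hφψ y (Or.inl hy)
      have e2 : μ₂ φ = μ₂ ψ := hF₂s φ ψ fun y hy => hφψ y (Or.inr hy)
      simp [mpComb, e1, e2]
    rcases hmem with h | h
    · exact hxF₁ h
    · exact hxF₂ h
  calc Cardinal.mk (IPMsupport (mpComb α β μ₁ μ₂))
      ≤ Cardinal.mk ((IPMsupport μ₁ ∪ IPMsupport μ₂ : Set X)) :=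
        Cardinal.mk_le_mk_of_subset hsub
    _ ≤ Cardinal.mk (IPMsupport μ₁) + Cardinal.mk (IPMsupport μ₂) := Cardinal.mk_union_le _ _
    _ < τ := Cardinal.add_lt_of_lt hτ h₁ h₂
end

section
/- (Proposition 2) If Y is an everywhere dense subspace of a Tychonoff space X, then the set I_{β,ω}(Y) of finitely supported idempotent probability measures on βX all of whose support points lie in Y is everywhere dense in I_β(X). -/
lemma ipm_mono {K : Type*} [TopologicalSpace K] {μ : C(K, ℝ) → ℝ} (hμ : IsIPM μ)
    {a b : C(K, ℝ)} (h : a ≤ b) : μ a ≤ μ b := by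
  have h2 := hμ.2.2 a b
  rw [sup_eq_right.2 h] at h2
  rw [h2]; exact le_max_left _ _

lemma ipm_approx {K : Type*} [TopologicalSpace K] [CompactSpace K] [T2Space K] [Nonempty K]
    (D : Set K) (hD : Dense D) (μ : C(K, ℝ) → ℝ) (hμ : IsIPM μ)
    (Φ : Finset C(K, ℝ)) {ε : ℝ} (hε : 0 < ε) :
    ∃ ν : C(K, ℝ) → ℝ, IsFinSuppIPM D ν ∧ ∀ φ ∈ Φ, |ν φ - μ φ| ≤ ε := by
  classical
  set M : ℝ := 2 * Φ.sum (fun φ => ‖φ‖) with hMdef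
  have hM0 : 0 ≤ M := by
    have : 0 ≤ Φ.sum (fun φ => ‖φ‖) := Finset.sum_nonneg fun φ _ => norm_nonneg φ
    linarith
  have hMφ : ∀ φ ∈ Φ, 2 * ‖φ‖ ≤ M := by
    intro φ hφ
    have := Finset.single_le_sum (fun (ψ : C(K, ℝ)) _ => norm_nonneg ψ) hφ
    simp only [hMdef]; linarith
  -- the basic open cover
  set V : K → Set K := fun x => {y | ∀ φ ∈ Φ, |φ y - φ x| < ε / 2} with hVdef
  have hVopen : ∀ x, IsOpen (V x) := by
    intro x
    have : V x = ⋂ φ ∈ Φ, {y | |φ y - φ x| < ε / 2} := by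
      ext y; simp [hVdef]
    rw [this]
    refine isOpen_biInter_finset fun φ _ => ?_
    have : {y | |φ y - φ x| < ε / 2} = (fun y => |φ y - φ x|) ⁻¹' Set.Iio (ε / 2) := rfl
    rw [this]
    exact ((φ.continuous.sub continuous_const).abs).isOpen_preimage _ isOpen_Iio
  have hVmem : ∀ x, x ∈ V x := by
    intro x φ _; simpa using half_pos hε
  obtain ⟨T, hT⟩ := isCompact_univ.elim_finite_subcover V hVopen
    (fun y _ => Set.mem_iUnion.2 ⟨y, hVmem y⟩)
  have hTne : T.Nonempty := by
    obtain ⟨k⟩ := ‹Nonempty K›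
    obtain ⟨x, hx, -⟩ := Set.mem_iUnion₂.1 (hT (Set.mem_univ k))
    exact ⟨x, hx⟩
  obtain ⟨n, hn⟩ : ∃ n, T.card = n + 1 :=
    ⟨T.card - 1, (Nat.succ_pred_eq_of_pos hTne.card_pos).symm⟩
  set c : Fin (n + 1) → K := fun i => (T.equivFin.symm (Fin.cast hn.symm i) : K) with hcdef
  have hc : ∀ y : K, ∃ i, y ∈ V (c i) := by
    intro y
    obtain ⟨x, hxT, hyx⟩ := Set.mem_iUnion₂.1 (hT (Set.mem_univ y))
    refine ⟨Fin.cast hn (T.equivFin ⟨x, hxT⟩), ?_⟩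
    simpa [hcdef] using hyx
  -- pick points in D
  have hpick : ∀ i : Fin (n + 1), ∃ z, z ∈ V (c i) ∩ D :=
    fun i => hD.inter_open_nonempty (V (c i)) (hVopen _) ⟨c i, hVmem _⟩
  choose p hp using hpick
  have hpD : ∀ i, p i ∈ D := fun i => (hp i).2
  have hosc : ∀ i, ∀ φ ∈ Φ, ∀ y ∈ V (c i), |φ y - φ (p i)| ≤ ε := by
    intro i φ hφ y hy
    have h1 := hy φ hφ
    have h2 := (hp i).1 φ hφ
    calc |φ y - φ (p i)| ≤ |φ y - φ (c i)| + |φ (c i) - φ (p i)| := abs_sub_le _ _ _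
      _ ≤ ε / 2 + ε / 2 := by rw [abs_sub_comm (φ (c i))]; linarith
      _ = ε := by ring
  -- shrinking
  obtain ⟨v, hvcov, -, hvsub⟩ := exists_subset_iUnion_closure_subset isClosed_univ
    (fun i => hVopen (c i)) (fun x _ => Set.toFinite _)
    (by intro y _; exact Set.mem_iUnion.2 (hc y))
  set F : Fin (n + 1) → Set K := fun i => closure (v i) with hFdef
  have hFcover : ∀ x : K, ∃ i, x ∈ F i := by
    intro x
    obtain ⟨i, hi⟩ := Set.mem_iUnion.1 (hvcov (Set.mem_univ x))
    exact ⟨i, subset_closure hi⟩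
  -- Urysohn functions
  have hury : ∀ i : Fin (n + 1), ∃ f : C(K, ℝ),
      Set.EqOn f 0 (F i) ∧ Set.EqOn f 1 (V (c i))ᶜ ∧ ∀ x, f x ∈ Set.Icc (0 : ℝ) 1 := by
    intro i
    refine exists_continuous_zero_one_of_isClosed isClosed_closure
      (hVopen (c i)).isClosed_compl ?_
    rw [Set.disjoint_compl_right_iff_subset]
    exact hvsub i
  choose f hf0 hf1 hf01 using hury
  set g : Fin (n + 1) → C(K, ℝ) := fun i => (-M) • f i with hgdef
  have hgapp : ∀ i x, g i x = -M * f i x := fun i x => rfl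
  have hg_le0 : ∀ i x, g i x ≤ 0 := by
    intro i x; rw [hgapp]
    have := (hf01 i x).1
    nlinarith
  have hgF : ∀ i, ∀ x ∈ F i, g i x = 0 := by
    intro i x hx; rw [hgapp]
    have : f i x = 0 := hf0 i hx
    rw [this]; ring
  have hgout : ∀ i, ∀ x, x ∉ V (c i) → g i x = -M := by
    intro i x hx; rw [hgapp]
    have : f i x = 1 := hf1 i hx
    rw [this]; ring
  set lam : Fin (n + 1) → ℝ := fun i => μ (g i) with hlamdef
  have hμsup : ∀ h : Fin (n + 1) → C(K, ℝ),
      μ (Finset.univ.sup' Finset.univ_nonempty h)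
        = Finset.univ.sup' Finset.univ_nonempty (fun i => μ (h i)) := by
    intro h
    exact Finset.comp_sup'_eq_sup'_comp Finset.univ_nonempty μ (fun a b => hμ.2.2 a b)
  have hsupg : Finset.univ.sup' Finset.univ_nonempty g = 0 := by
    ext x
    rw [ContinuousMap.sup'_apply, ContinuousMap.zero_apply]
    refine le_antisymm (Finset.sup'_le _ _ fun i _ => hg_le0 i x) ?_
    obtain ⟨i, hi⟩ := hFcover x
    calc (0 : ℝ) = g i x := (hgF i x hi).symm
      _ ≤ _ := Finset.le_sup' (fun j => g j x) (Finset.mem_univ i)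
  have hlam0 : Finset.univ.sup' Finset.univ_nonempty lam = 0 := by
    have := hμsup g
    rw [hsupg] at this
    have h0 : μ (0 : C(K, ℝ)) = 0 := by
      have := hμ.1 0
      simpa using this
    rw [h0] at this
    exact this.symm
  set ν : C(K, ℝ) → ℝ :=
    fun φ => Finset.univ.sup' Finset.univ_nonempty fun i => lam i + φ (p i) with hνdef
  refine ⟨ν, ⟨n, p, lam, hpD, hlam0, rfl⟩, ?_⟩
  intro φ hφ
  have hnorm : ∀ x : K, |φ x| ≤ ‖φ‖ := fun x => φ.norm_coe_le_norm x
  have hMbig : 2 * ‖φ‖ ≤ M := hMφ φ hφ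
  -- lower bound : ν φ ≤ μ φ + ε
  have hlow : ν φ ≤ μ φ + ε := by
    refine Finset.sup'_le _ _ fun i _ => ?_
    have key : (g i + ContinuousMap.const K (φ (p i))) ≤ φ + ContinuousMap.const K ε := by
      rw [ContinuousMap.le_def]
      intro x
      simp only [ContinuousMap.add_apply, ContinuousMap.const_apply]
      by_cases hx : x ∈ V (c i)
      · have h1 := hosc i φ hφ x hx
        have h2 := hg_le0 i x
        rw [abs_le] at h1
        linarith [h1.2]
      · have h1 := hgout i x hx
        have h2 := abs_le.1 (hnorm x)
        have h3 := abs_le.1 (hnorm (p i))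
        rw [h1]; linarith [h2.1, h3.2]
    have hle := ipm_mono hμ key
    rw [hμ.2.1 (g i) (φ (p i)), hμ.2.1 φ ε] at hle
    exact hle
  -- upper bound : μ φ ≤ ν φ + ε
  have hrep : φ = Finset.univ.sup' Finset.univ_nonempty (fun i => g i + φ) := by
    ext x
    rw [ContinuousMap.sup'_apply]
    refine le_antisymm ?_ (Finset.sup'_le _ _ fun i _ => by
      simp only [ContinuousMap.add_apply]
      linarith [hg_le0 i x])
    obtain ⟨i, hi⟩ := hFcover x
    calc φ x = g i x + φ x := by rw [hgF i x hi]; ring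
      _ = (g i + φ) x := rfl
      _ ≤ _ := Finset.le_sup' (fun j => (g j + φ) x) (Finset.mem_univ i)
  have hup : μ φ ≤ ν φ + ε := by
    obtain ⟨i0, -, hi0⟩ := Finset.exists_mem_eq_sup' (Finset.univ_nonempty) lam
    have hlami0 : lam i0 = 0 := by rw [← hi0, hlam0]
    have hνlow : -‖φ‖ ≤ ν φ := by
      have := Finset.le_sup' (fun i => lam i + φ (p i)) (Finset.mem_univ i0)
      have h3 := abs_le.1 (hnorm (p i0))
      rw [hlami0] at this
      simp only [zero_add] at this
      calc -‖φ‖ ≤ φ (p i0) := h3.1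
        _ ≤ ν φ := this
    have hterm : ∀ i : Fin (n + 1), μ (g i + φ) ≤ ν φ + ε := by
      intro i
      have key2 : g i + φ ≤ (g i + ContinuousMap.const K (φ (p i) + ε))
          ⊔ ContinuousMap.const K (-M + ‖φ‖) := by
        rw [ContinuousMap.le_def]
        intro x
        simp only [ContinuousMap.sup_apply, ContinuousMap.add_apply,
          ContinuousMap.const_apply, le_sup_iff]
        by_cases hx : x ∈ V (c i)
        · left
          have h1 := hosc i φ hφ x hx
          rw [abs_le] at h1
          linarith [h1.1]
        · right
          have h1 := hgout i x hx
          have h2 := abs_le.1 (hnorm x)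
          rw [h1]; linarith [h2.2]
      have hle := ipm_mono hμ key2
      rw [hμ.2.2, hμ.2.1 (g i) (φ (p i) + ε), hμ.1] at hle
      have hbound1 : lam i + (φ (p i) + ε) ≤ ν φ + ε := by
        have := Finset.le_sup' (fun j => lam j + φ (p j)) (Finset.mem_univ i)
        linarith
      have hbound2 : -M + ‖φ‖ ≤ ν φ + ε := by linarith
      calc μ (g i + φ) ≤ max (lam i + (φ (p i) + ε)) (-M + ‖φ‖) := hle
        _ ≤ ν φ + ε := max_le hbound1 hbound2
    calc μ φ = Finset.univ.sup' Finset.univ_nonempty (fun i => μ (g i + φ)) := by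
          rw [← hμsup]; exact congrArg μ hrep
      _ ≤ ν φ + ε := Finset.sup'_le _ _ fun i _ => hterm i
  rw [abs_le]
  constructor <;> linarith

/-- Proposition 2: if `Y` is dense in a Tychonoff space `X`, then
`I_{β,ω}(Y)` is dense in `I_β(X)`. -/
theorem finSuppIPM_dense_in_IBeta {X : Type*} [TopologicalSpace X] [T35Space X]
    (Y : Set X) (hY : Dense Y) :
    IBeta X ⊆
      closure {μ : C(StoneCech X, ℝ) → ℝ | IsFinSuppIPM (stoneCechUnit '' Y) μ} := by
  classical
  rintro μ ⟨hipm, -⟩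
  by_cases hK : Nonempty (StoneCech X)
  · have hD : Dense (stoneCechUnit '' Y) :=
      denseRange_stoneCechUnit.dense_image continuous_stoneCechUnit hY
    rw [mem_closure_iff_nhds]
    intro t ht
    rw [nhds_pi] at ht
    obtain ⟨I, hIfin, t', ht', hsub⟩ := Filter.mem_pi.1 ht
    choose d hd hball using fun φ => Metric.mem_nhds_iff.1 (ht' φ)
    set Φ : Finset C(StoneCech X, ℝ) := hIfin.toFinset with hΦdef
    set ε : ℝ := if h : Φ.Nonempty then min 1 (Φ.inf' h d) else 1 with hεdef
    have hε : 0 < ε := by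
      rw [hεdef]
      split_ifs with h
      · refine lt_min one_pos ?_
        rw [Finset.lt_inf'_iff]
        exact fun φ _ => hd φ
      · exact one_pos
    have hεd : ∀ φ ∈ Φ, ε ≤ d φ := by
      intro φ hφ
      rw [hεdef]
      rw [dif_pos ⟨φ, hφ⟩]
      exact (min_le_right _ _).trans (Finset.inf'_le d hφ)
    obtain ⟨ν, hν, hest⟩ := ipm_approx (stoneCechUnit '' Y) hD μ hipm Φ (half_pos hε)
    refine ⟨ν, ?_, hν⟩
    apply hsub
    intro φ hφI
    have hφΦ : φ ∈ Φ := hIfin.mem_toFinset.2 hφI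
    apply hball φ
    rw [Metric.mem_ball, Real.dist_eq]
    calc |ν φ - μ φ| ≤ ε / 2 := hest φ hφΦ
      _ < ε := by linarith
      _ ≤ d φ := hεd φ hφΦ
  · exfalso
    have hconst : (ContinuousMap.const (StoneCech X) (0 : ℝ))
        = ContinuousMap.const (StoneCech X) 1 := by
      ext x; exact absurd ⟨x⟩ hK
    have h0 := hipm.1 0
    have h1 := hipm.1 1
    rw [hconst] at h0
    rw [h1] at h0
    exact zero_ne_one h0.symm
end

section
/- Let f : X → Y be an open continuous surjection of compact Hausdorff spaces and φ ∈ C(X). Then the functions φ^* : Y → ℝ and φ_* : Y → ℝ defined by φ^*(y) = sup{φ(x) : x ∈ f⁻¹(y)} and φ_*(y) = inf{φ(x) : x ∈ f⁻¹(y)} are continuous. -/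
lemma fiberwise_sup_continuous_aux {X Y : Type*} [TopologicalSpace X] [CompactSpace X]
    [T2Space X] [TopologicalSpace Y] [CompactSpace Y] [T2Space Y]
    (f : X → Y) (hf : Continuous f) (hopen : IsOpenMap f) (hsurj : Function.Surjective f)
    (φ : C(X, ℝ)) :
    Continuous (fun y : Y => sSup (φ '' (f ⁻¹' {y}))) := by
  set g : Y → ℝ := fun y => sSup (φ '' (f ⁻¹' {y})) with hg
  have hfib : ∀ y : Y, IsCompact (f ⁻¹' {y}) :=
    fun y => (isClosed_singleton.preimage hf).isCompact
  have hne : ∀ y : Y, (f ⁻¹' {y}).Nonempty := fun y => hsurj y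
  have hbdd : ∀ y : Y, BddAbove (φ '' (f ⁻¹' {y})) :=
    fun y => ((hfib y).image φ.continuous).bddAbove
  have hle : ∀ (y : Y) (x : X), f x = y → φ x ≤ g y := by
    intro y x hx
    exact le_csSup (hbdd y) ⟨x, hx, rfl⟩
  have hattain : ∀ y : Y, ∃ x : X, f x = y ∧ φ x = g y := by
    intro y
    obtain ⟨x, hx, hmax⟩ := (hfib y).exists_sSup_image_eq (hne y) φ.continuous.continuousOn
    exact ⟨x, hx, hmax.symm⟩
  rw [continuous_iff_continuousAt]
  intro y₀
  rw [ContinuousAt, Metric.tendsto_nhds]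
  intro ε hε
  -- upper bound neighborhood
  set U : Set X := {x | φ x < g y₀ + ε} with hU
  have hUopen : IsOpen U := isOpen_lt φ.continuous continuous_const
  have hK : IsCompact Uᶜ := (hUopen.isClosed_compl).isCompact
  have hy₀ : y₀ ∉ f '' Uᶜ := by
    rintro ⟨x, hx, rfl⟩
    exact hx (lt_of_le_of_lt (hle _ x rfl) (lt_add_of_pos_right _ hε))
  have hV₁open : IsOpen (f '' Uᶜ)ᶜ := (hK.image hf).isClosed.isOpen_compl
  -- lower bound neighborhood
  obtain ⟨x₀, hx₀, hφx₀⟩ := hattain y₀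
  set W : Set X := {x | g y₀ - ε < φ x} with hW
  have hWopen : IsOpen W := isOpen_lt continuous_const φ.continuous
  have hx₀W : x₀ ∈ W := by simp [hW, hφx₀, hε]
  have hV₂open : IsOpen (f '' W) := hopen W hWopen
  have hmem : y₀ ∈ (f '' Uᶜ)ᶜ ∩ f '' W := ⟨hy₀, ⟨x₀, hx₀W, hx₀⟩⟩
  filter_upwards [((hV₁open.inter hV₂open).mem_nhds hmem)] with y hy
  obtain ⟨hy₁, x, hxW, hxy⟩ := hy
  have h1 : g y < g y₀ + ε := by
    obtain ⟨x', hx', hφx'⟩ := hattain y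
    have : x' ∈ U := by
      by_contra h
      exact hy₁ ⟨x', h, hx'⟩
    rw [← hφx']; exact this
  have h2 : g y₀ - ε < g y := lt_of_lt_of_le hxW (hle y x hxy)
  rw [Real.dist_eq, abs_lt]
  constructor <;> linarith

/-- for an open continuous surjection of compact Hausdorff spaces the
fiberwise sup `φ^*` and fiberwise inf `φ_*` of a continuous function are continuous. -/
theorem fiberwise_sup_inf_continuous {X Y : Type*} [TopologicalSpace X] [CompactSpace X]
    [T2Space X] [TopologicalSpace Y] [CompactSpace Y] [T2Space Y]
    (f : X → Y) (hf : Continuous f) (hopen : IsOpenMap f) (hsurj : Function.Surjective f)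
    (φ : C(X, ℝ)) :
    Continuous (fun y : Y => sSup (φ '' (f ⁻¹' {y}))) ∧
    Continuous (fun y : Y => sInf (φ '' (f ⁻¹' {y}))) := by
  refine ⟨fiberwise_sup_continuous_aux f hf hopen hsurj φ, ?_⟩
  have h := fiberwise_sup_continuous_aux f hf hopen hsurj (-φ)
  have key : ∀ y : Y, sInf (φ '' (f ⁻¹' {y})) = -sSup ((-φ : C(X,ℝ)) '' (f ⁻¹' {y})) := by
    intro y
    have : ((-φ : C(X,ℝ)) '' (f ⁻¹' {y})) = -(φ '' (f ⁻¹' {y})) := by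
      ext r
      simp [Set.mem_neg, Set.mem_image]
      constructor
      · rintro ⟨x, hx, hr⟩; exact ⟨x, hx, by linarith⟩
      · rintro ⟨x, hx, hr⟩; exact ⟨x, hx, by linarith⟩
    have hcpt : IsCompact (⇑φ '' (f ⁻¹' {y})) := ((isClosed_singleton.preimage hf).isCompact).image φ.continuous
    have hne' : (⇑φ '' (f ⁻¹' {y})).Nonempty := Set.Nonempty.image _ (hsurj y)
    rw [this, csSup_neg hne' hcpt.bddBelow, neg_neg]
  simp only [key]
  exact h.neg
end

section
/- (Lemma 1) Let f : X → Y be an open continuous surjection of compact Hausdorff spaces, y₀ ∈ Y, and φ ∈ C(X). Then there is a function ψ ∈ C(Y) such that ψ ∘ f ≤ φ and ψ(y₀) = inf{φ(x) : x ∈ f⁻¹(y₀)}. -/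
/-- Lemma 1: there is `ψ ∈ C(Y)` with `ψ ∘ f ≤ φ` and
`ψ(y₀) = inf {φ(x) : x ∈ f⁻¹(y₀)}`. -/
theorem exists_continuous_le_with_inf_at_point {X Y : Type*} [TopologicalSpace X]
    [CompactSpace X] [T2Space X] [TopologicalSpace Y] [CompactSpace Y] [T2Space Y]
    (f : X → Y) (hf : Continuous f) (hopen : IsOpenMap f) (hsurj : Function.Surjective f)
    (y₀ : Y) (φ : C(X, ℝ)) :
    ∃ ψ : C(Y, ℝ), (∀ x : X, ψ (f x) ≤ φ x) ∧ ψ y₀ = sInf (φ '' (f ⁻¹' {y₀})) := by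
  set g : Y → ℝ := fun y => sInf (φ '' (f ⁻¹' {y})) with hg
  have hfibne : ∀ y : Y, (f ⁻¹' {y}).Nonempty := by
    intro y; obtain ⟨x, hx⟩ := hsurj y; exact ⟨x, hx⟩
  have hfibcomp : ∀ y : Y, IsCompact (f ⁻¹' {y}) :=
    fun y => (isClosed_singleton.preimage hf).isCompact
  have himgcomp : ∀ y : Y, IsCompact (φ '' (f ⁻¹' {y})) :=
    fun y => (hfibcomp y).image φ.continuous
  have hbdd : ∀ y : Y, BddBelow (φ '' (f ⁻¹' {y})) := fun y => (himgcomp y).bddBelow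
  have hattain : ∀ y : Y, ∃ x : X, f x = y ∧ φ x = g y := by
    intro y
    have := (himgcomp y).sInf_mem ((hfibne y).image φ)
    obtain ⟨x, hx, hφx⟩ := this
    exact ⟨x, hx, hφx⟩
  have hle : ∀ x : X, g (f x) ≤ φ x := by
    intro x
    exact csInf_le (hbdd (f x)) ⟨x, rfl, rfl⟩
  have hcont : Continuous g := by
    rw [continuous_iff_continuousAt]
    intro y
    rw [ContinuousAt, Metric.tendsto_nhds]
    intro ε hε
    -- upper bound neighborhood
    obtain ⟨x₀, hx₀f, hx₀φ⟩ := hattain y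
    set U : Set X := φ ⁻¹' Set.Iio (g y + ε) with hU
    have hUopen : IsOpen U := isOpen_Iio.preimage φ.continuous
    have hx₀U : x₀ ∈ U := by simp [hU, hx₀φ, hε]
    -- lower bound neighborhood
    set A : Set X := φ ⁻¹' Set.Iic (g y - ε) with hA
    have hAclosed : IsClosed A := isClosed_Iic.preimage φ.continuous
    have hfA : IsClosed (f '' A) := (hAclosed.isCompact.image hf).isClosed
    have hynotin : y ∉ f '' A := by
      rintro ⟨x, hxA, hxf⟩
      have h1 : g y ≤ φ x := hxf ▸ hle x
      have h2 : φ x ≤ g y - ε := hxA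
      linarith
    have hmem : (f '' U) ∩ (f '' A)ᶜ ∈ nhds y :=
      Filter.inter_mem ((hopen U hUopen).mem_nhds ⟨x₀, hx₀U, hx₀f⟩)
        (hfA.isOpen_compl.mem_nhds hynotin)
    filter_upwards [hmem] with y' hy'
    obtain ⟨⟨x₁, hx₁U, hx₁f⟩, hy'c⟩ := hy'
    have hub : g y' < g y + ε := lt_of_le_of_lt (hx₁f ▸ hle x₁) hx₁U
    obtain ⟨x₂, hx₂f, hx₂φ⟩ := hattain y'
    have hlb : g y - ε < g y' := by
      by_contra hcon
      push_neg at hcon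
      exact hy'c ⟨x₂, by simpa [hA] using hx₂φ ▸ hcon, hx₂f⟩
    rw [Real.dist_eq, abs_lt]
    constructor <;> linarith
  exact ⟨⟨g, hcont⟩, hle, rfl⟩
end

section
/- (Lemma 2) Let f : X → Y be a continuous map of compact Hausdorff spaces, y₀ ∈ Y, and ν an idempotent probability measure on X such that I(f)(ν) = δ_{y₀}. Then for any φ ∈ C(X) and c ∈ ℝ such that φ(x) ≥ c for all x ∈ f⁻¹(y₀), one has ν(φ) ≥ c; and for any φ ∈ C(X) with φ(x) ≤ c for all x ∈ f⁻¹(y₀), one has ν(φ) ≤ c. -/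
lemma ipm_mono_s14 {X : Type*} [TopologicalSpace X] {ν : C(X, ℝ) → ℝ} (hν : IsIPM ν)
    {φ ψ : C(X, ℝ)} (hle : ∀ x, φ x ≤ ψ x) : ν φ ≤ ν ψ := by
  have hsup : φ ⊔ ψ = ψ := by ext x; exact sup_eq_right.mpr (hle x)
  have h2 : max (ν φ) (ν ψ) = ν ψ := by rw [← hν.2.2, hsup]
  rw [← h2]; exact le_max_left _ _

/-- Lemma 2: if `I(f)(ν) = δ_{y₀}`, then bounds for `φ` on the fiber
`f⁻¹(y₀)` give the same bounds for `ν(φ)`. -/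
theorem ipm_bound_on_fiber {X Y : Type*} [TopologicalSpace X] [CompactSpace X] [T2Space X]
    [TopologicalSpace Y] [CompactSpace Y] [T2Space Y]
    (f : C(X, Y)) (y₀ : Y) (ν : C(X, ℝ) → ℝ) (hν : IsIPM ν)
    (h : IPMmap f ν = IPMdirac y₀) (φ : C(X, ℝ)) (c : ℝ) :
    ((∀ x : X, f x = y₀ → c ≤ φ x) → c ≤ ν φ) ∧
    ((∀ x : X, f x = y₀ → φ x ≤ c) → ν φ ≤ c) := by
  have hpush : ∀ ψ : C(Y, ℝ), ν (ψ.comp f) = ψ y₀ := fun ψ => congrFun h ψ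
  have hne : Nonempty X := by
    by_contra hno
    have h0 := hν.1 0
    have h1 := hν.1 1
    have he : (ContinuousMap.const X (0:ℝ)) = ContinuousMap.const X 1 := by
      ext x; exact absurd ⟨x⟩ hno
    rw [he] at h0
    rw [h1] at h0
    norm_num at h0
  constructor
  · intro hfib
    have key : ∀ ε : ℝ, 0 < ε → c - ε ≤ ν φ := by
      intro ε hε
      set K : Set X := φ ⁻¹' Set.Iic (c - ε) with hKdef
      have hKcl : IsClosed K := isClosed_Iic.preimage φ.continuous
      have hfK : IsClosed (f '' K) := (hKcl.isCompact.image f.continuous).isClosed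
      have hy0 : y₀ ∉ f '' K := by
        rintro ⟨x, hxK, hfx⟩
        have := hfib x hfx
        have : φ x ≤ c - ε := hxK
        linarith [hfib x hfx]
      obtain ⟨g, hg0, hg1, hg01⟩ := exists_continuous_zero_one_of_isClosed hfK
        isClosed_singleton (Set.disjoint_singleton_right.mpr hy0)
      obtain ⟨x₀, -, hx₀⟩ := isCompact_univ.exists_isMinOn Set.univ_nonempty
        φ.continuous.continuousOn
      set M : ℝ := max (c - ε - φ x₀) 0 with hMdef
      have hM0 : 0 ≤ M := le_max_right _ _
      set ψ : C(Y, ℝ) := ContinuousMap.const Y (c - ε) -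
        ContinuousMap.const Y M * (ContinuousMap.const Y 1 - g) with hψdef
      have hχle : ∀ x, (ψ.comp f) x ≤ φ x := by
        intro x
        simp only [hψdef, ContinuousMap.comp_apply, ContinuousMap.sub_apply,
          ContinuousMap.mul_apply, ContinuousMap.const_apply, ContinuousMap.one_apply]
        by_cases hx : φ x ≤ c - ε
        · have hg : g (f x) = 0 := hg0 ⟨x, hx, rfl⟩
          rw [hg]
          have hm1 : c - ε - φ x₀ ≤ M := le_max_left _ _
          have hm2 : φ x₀ ≤ φ x := hx₀ (Set.mem_univ x)
          linarith
        · push_neg at hx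
          have h1 : g (f x) ≤ 1 := (hg01 (f x)).2
          nlinarith
      have hcomp : ν (ψ.comp f) = c - ε := by
        rw [hpush]
        have : g y₀ = 1 := hg1 rfl
        simp [hψdef, this]
      have := ipm_mono_s14 hν hχle
      linarith
    refine le_of_forall_pos_le_add fun ε hε => ?_
    linarith [key ε hε]
  · intro hfib
    have key : ∀ ε : ℝ, 0 < ε → ν φ ≤ c + ε := by
      intro ε hε
      set K : Set X := φ ⁻¹' Set.Ici (c + ε) with hKdef
      have hKcl : IsClosed K := isClosed_Ici.preimage φ.continuous
      have hfK : IsClosed (f '' K) := (hKcl.isCompact.image f.continuous).isClosed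
      have hy0 : y₀ ∉ f '' K := by
        rintro ⟨x, hxK, hfx⟩
        have : c + ε ≤ φ x := hxK
        linarith [hfib x hfx]
      obtain ⟨g, hg0, hg1, hg01⟩ := exists_continuous_zero_one_of_isClosed hfK
        isClosed_singleton (Set.disjoint_singleton_right.mpr hy0)
      obtain ⟨x₀, -, hx₀⟩ := isCompact_univ.exists_isMaxOn Set.univ_nonempty
        φ.continuous.continuousOn
      set M : ℝ := max (φ x₀ - c - ε) 0 with hMdef
      have hM0 : 0 ≤ M := le_max_right _ _
      set ψ : C(Y, ℝ) := ContinuousMap.const Y (c + ε) +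
        ContinuousMap.const Y M * (ContinuousMap.const Y 1 - g) with hψdef
      have hχge : ∀ x, φ x ≤ (ψ.comp f) x := by
        intro x
        simp only [hψdef, ContinuousMap.comp_apply, ContinuousMap.add_apply,
          ContinuousMap.sub_apply, ContinuousMap.mul_apply, ContinuousMap.const_apply,
          ContinuousMap.one_apply]
        by_cases hx : c + ε ≤ φ x
        · have hg : g (f x) = 0 := hg0 ⟨x, hx, rfl⟩
          rw [hg]
          have hm1 : φ x₀ - c - ε ≤ M := le_max_left _ _
          have hm2 : φ x ≤ φ x₀ := hx₀ (Set.mem_univ x)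
          linarith
        · push_neg at hx
          have h1 : g (f x) ≤ 1 := (hg01 (f x)).2
          nlinarith
      have hcomp : ν (ψ.comp f) = c + ε := by
        rw [hpush]
        have : g y₀ = 1 := hg1 rfl
        simp [hψdef, this]
      have := ipm_mono_s14 hν hχge
      linarith
    exact le_of_forall_pos_le_add key
end

section
/- For every compact Hausdorff space X, the set I(X) of idempotent probability measures on X is a compact subspace of ℝ^{C(X)} with the product topology. -/
/-- `I(X)` is a compact subspace of `ℝ^{C(X)}`. -/
theorem ipm_isCompact {X : Type*} [TopologicalSpace X] [CompactSpace X] [T2Space X] :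
    IsCompact {μ : C(X, ℝ) → ℝ | IsIPM μ} := by
  have hsub : {μ : C(X, ℝ) → ℝ | IsIPM μ} ⊆
      Set.pi Set.univ (fun φ : C(X, ℝ) => Set.Icc (-‖φ‖) ‖φ‖) := by
    rintro μ ⟨h1, h2, h3⟩ φ -
    have mono : ∀ f g : C(X, ℝ), f ≤ g → μ f ≤ μ g := by
      intro f g hle
      have h := h3 f g
      rw [sup_eq_right.mpr hle] at h
      rw [h]
      exact le_max_left _ _
    constructor
    · have : ContinuousMap.const X (-‖φ‖) ≤ φ := fun x =>
        neg_le_of_abs_le (φ.norm_coe_le_norm x)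
      have := mono _ _ this
      rwa [h1] at this
    · have : φ ≤ ContinuousMap.const X ‖φ‖ := fun x =>
        le_of_abs_le (φ.norm_coe_le_norm x)
      have := mono _ _ this
      rwa [h1] at this
  have hclosed : IsClosed {μ : C(X, ℝ) → ℝ | IsIPM μ} := by
    have heq : {μ : C(X, ℝ) → ℝ | IsIPM μ} =
        (⋂ c : ℝ, {μ : C(X, ℝ) → ℝ | μ (ContinuousMap.const X c) = c}) ∩
        ((⋂ φ : C(X, ℝ), ⋂ c : ℝ,
          {μ : C(X, ℝ) → ℝ | μ (φ + ContinuousMap.const X c) = μ φ + c}) ∩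
        (⋂ φ : C(X, ℝ), ⋂ ψ : C(X, ℝ),
          {μ : C(X, ℝ) → ℝ | μ (φ ⊔ ψ) = max (μ φ) (μ ψ)})) := by
      ext μ
      simp only [IsIPM, Set.mem_setOf_eq, Set.mem_inter_iff, Set.mem_iInter]
    rw [heq]
    refine IsClosed.inter ?_ (IsClosed.inter ?_ ?_)
    · exact isClosed_iInter fun c =>
        isClosed_eq (continuous_apply _) continuous_const
    · exact isClosed_iInter fun φ => isClosed_iInter fun c =>
        isClosed_eq (continuous_apply _) ((continuous_apply φ).add continuous_const)
    · exact isClosed_iInter fun φ => isClosed_iInter fun ψ =>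
        isClosed_eq (continuous_apply _) ((continuous_apply φ).max (continuous_apply ψ))
  exact (isCompact_univ_pi fun φ => isCompact_Icc).of_isClosed_subset hclosed hsub
end

section
/- (Proposition 4) Let X be a Tychonoff space, μ₁, μ₂ ∈ I_β(X), and α, β ∈ ℝ with max(α, β) = 0. Then the max-plus combination α⊙μ₁ ⊕ β⊙μ₂ belongs to I_β(X); that is, I_β(X) is a max-plus-convex subset of I(βX). -/
/-- Proposition 4: `I_β(X)` is a max-plus-convex subset of `I(βX)`. -/
theorem IBeta_maxPlusConvex {X : Type*} [TopologicalSpace X] [T35Space X]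
    (μ₁ μ₂ : C(StoneCech X, ℝ) → ℝ) (hμ₁ : μ₁ ∈ IBeta X) (hμ₂ : μ₂ ∈ IBeta X)
    (α β : ℝ) (hαβ : max α β = 0) :
    mpComb α β μ₁ μ₂ ∈ IBeta X := by
  obtain ⟨⟨h1c, h1a, h1m⟩, h1s⟩ := hμ₁
  obtain ⟨⟨h2c, h2a, h2m⟩, h2s⟩ := hμ₂
  refine ⟨⟨?_, ?_, ?_⟩, ?_⟩
  · intro c
    simp only [mpComb, h1c, h2c]
    rw [max_add_add_right, hαβ, zero_add]
  · intro φ c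
    simp only [mpComb, h1a, h2a, ← add_assoc, max_add_add_right]
  · intro φ ψ
    simp only [mpComb, h1m, h2m]
    rcases le_total (μ₁ φ) (μ₁ ψ) with h | h <;> rcases le_total (μ₂ φ) (μ₂ ψ) with h' | h' <;>
      simp only [max_def] <;> split_ifs <;> linarith
  · intro x hx
    by_contra hmem
    have h1 : x ∉ IPMsupport μ₁ := fun h => hmem (h1s h)
    have h2 : x ∉ IPMsupport μ₂ := fun h => hmem (h2s h)
    simp only [IPMsupport, Set.mem_sInter, Set.mem_setOf_eq, not_forall] at h1 h2
    obtain ⟨F, ⟨hFc, hFs⟩, hxF⟩ := h1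
    obtain ⟨G, ⟨hGc, hGs⟩, hxG⟩ := h2
    have hFG : x ∈ F ∪ G := hx (F ∪ G) ⟨hFc.union hGc, fun φ ψ h => by
      unfold mpComb
      rw [hFs φ ψ (fun y hy => h y (Or.inl hy)), hGs φ ψ (fun y hy => h y (Or.inr hy))]⟩
    rcases hFG with h | h
    · exact hxF h
    · exact hxG h
end
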